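/- arXiv:1401.3133 — 3 statements merged into one kernel-verified Lean document; each statement's English description precedes it below -/
import Mathlib

section
/- Assume L¹(Ω,F,P) is separable. Let A ⊂ L^∞ be a coherent, surplus-invariant acceptance set that is σ(L^∞,L¹)-closed. Then there exists B ∈ F such that A = SPAN(B) = {X ∈ L^∞ : X·1_B ≥ 0 a.s.}. -/
open MeasureTheory

variable {Ω : Type*} [MeasurableSpace Ω]

/-- An acceptance set: a nonempty, proper subset of `L^∞` that is upward closed
(w.r.t. the a.e. order on `Lp ℝ ∞ μ`). -/
def IsAcceptanceSet (μ : Measure Ω) (A : Set (Lp ℝ ⊤ μ)) : Prop :=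
  A.Nonempty ∧ A ≠ Set.univ ∧ ∀ X ∈ A, ∀ Y : Lp ℝ ⊤ μ, X ≤ Y → Y ∈ A

/-- Surplus invariance: if `X ∈ A` and `Y⁻ = X⁻` then `Y ∈ A`. -/
def SurplusInvariant (μ : Measure Ω) (A : Set (Lp ℝ ⊤ μ)) : Prop :=
  ∀ X ∈ A, ∀ Y : Lp ℝ ⊤ μ, (-Y) ⊔ 0 = (-X) ⊔ 0 → Y ∈ A

/-- The weak-star topology `σ(L^∞, L¹)` on `L^∞`: the topology induced by the
pairing maps `X ↦ (Z ↦ E[XZ])`, `Z ∈ L¹`. -/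
noncomputable def weakStarTopology (μ : Measure Ω) : TopologicalSpace (Lp ℝ ⊤ μ) :=
  TopologicalSpace.induced
    (fun X : Lp ℝ ⊤ μ => fun Z : Lp ℝ 1 μ => ∫ ω, X ω * Z ω ∂μ)
    Pi.topologicalSpace

open Filter Topology
open scoped ENNReal

/-! Acceptability of `X` only depends on `X ⊓ 0`, by surplus invariance and monotonicity. Call
`S` an acceptable-loss set when `-𝟙_S ∈ A`. These sets are closed under finite unions (`A` is a
convex cone) and under increasing unions (`A` is weak-star closed and `E[𝟙_{Sₙ} Z] → E[𝟙_S Z]` for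
`Z ∈ L¹`), so one of them, `S`, has maximal measure. Then `B = Sᶜ` works: if `X ∈ A` were below
`-ε` on a non-null `T ⊆ Sᶜ`, then `S ∪ T` would be a larger acceptable-loss set; conversely, if
`X ≥ 0` off `S`, then `X ⊓ 0 ≥ -(‖X‖ + 1) 𝟙_S ∈ A`. -/

theorem Convex.add_mem_of_smul_mem {𝕜 E : Type*} [Field 𝕜] [LinearOrder 𝕜] [IsStrictOrderedRing 𝕜]
    [AddCommGroup E] [Module 𝕜 E] {s : Set E} (hs : Convex 𝕜 s)
    (hsmul : ∀ c : 𝕜, 0 < c → ∀ x ∈ s, c • x ∈ s) {x y : E} (hx : x ∈ s) (hy : y ∈ s) :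
    x + y ∈ s := by
  have hmid : (2⁻¹ : 𝕜) • x + (2⁻¹ : 𝕜) • y ∈ s :=
    hs hx hy (by norm_num) (by norm_num) (by norm_num)
  simpa [smul_add, smul_smul] using hsmul 2 two_pos _ hmid

namespace MeasureTheory

theorem exists_forall_measure_le_of_iUnion_mem (μ : Measure Ω) {𝒮 : Set (Set Ω)} (hne : 𝒮.Nonempty)
    (hiUnion : ∀ S : ℕ → Set Ω, (∀ n, S n ∈ 𝒮) → ⋃ n, S n ∈ 𝒮) :
    ∃ S ∈ 𝒮, ∀ T ∈ 𝒮, μ T ≤ μ S := by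
  obtain ⟨u, -, hu, hu𝒮⟩ := exists_seq_tendsto_sSup (hne.image μ) (OrderTop.bddAbove _)
  choose S hS𝒮 hSu using hu𝒮
  refine ⟨⋃ n, S n, hiUnion S hS𝒮, fun T hT => ?_⟩
  calc μ T ≤ sSup (μ '' 𝒮) := le_sSup ⟨T, hT, rfl⟩
    _ ≤ μ (⋃ n, S n) :=
      le_of_tendsto' hu fun n => hSu n ▸ measure_mono (Set.subset_iUnion S n)

theorem Lp.ae_norm_le_norm_top {E : Type*} [NormedAddCommGroup E] {μ : Measure Ω}
    (X : Lp E ⊤ μ) : ∀ᵐ ω ∂μ, ‖X ω‖ ≤ ‖X‖ := by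
  rw [Lp.norm_def, toReal_eLpNorm (Lp.aestronglyMeasurable X)]
  exact ae_le_lpNorm_exponent_top (Lp.memLp X)

theorem integral_indicatorConstLp_mul {μ : Measure Ω} {p : ℝ≥0∞} {s : Set Ω}
    (hs : MeasurableSet s) (hμs : μ s ≠ ⊤) (c : ℝ) (Z : Ω → ℝ) :
    ∫ ω, indicatorConstLp p hs hμs c ω * Z ω ∂μ = c * ∫ ω in s, Z ω ∂μ := by
  rw [← integral_const_mul, ← integral_indicator hs]
  refine integral_congr_ae ?_
  filter_upwards [indicatorConstLp_coeFn (p := p) (hs := hs) (hμs := hμs) (c := c)] with ω hω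
  by_cases h : ω ∈ s <;> simp [hω, h]

theorem tendsto_weakStarTopology_iff {μ : Measure Ω} {ι : Type*} {l : Filter ι}
    {f : ι → Lp ℝ ⊤ μ} {X : Lp ℝ ⊤ μ} :
    Tendsto f l (@nhds _ (weakStarTopology μ) X) ↔
      ∀ Z : Lp ℝ 1 μ, Tendsto (fun i => ∫ ω, f i ω * Z ω ∂μ) l (𝓝 (∫ ω, X ω * Z ω ∂μ)) := by
  rw [show @nhds _ (weakStarTopology μ) X = _ from nhds_induced _ _, tendsto_comap_iff,
    tendsto_pi_nhds]
  rfl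

end MeasureTheory

section AcceptanceSet

variable {μ : Measure Ω} {A : Set (Lp ℝ ⊤ μ)}

theorem SurplusInvariant.inf_zero_mem (hsi : SurplusInvariant μ A) {X : Lp ℝ ⊤ μ} (hX : X ∈ A) :
    X ⊓ 0 ∈ A :=
  hsi X hX _ (by simp [neg_inf])

theorem SurplusInvariant.mem_of_ae_min_le (hsi : SurplusInvariant μ A) (hup : IsUpperSet A)
    {X Y : Lp ℝ ⊤ μ} (hX : X ∈ A) (h : ∀ᵐ ω ∂μ, min (X ω) 0 ≤ Y ω) : Y ∈ A := by
  refine hup ?_ (hsi.inf_zero_mem hX)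
  rw [← Lp.coeFn_le]
  filter_upwards [Lp.coeFn_inf X 0, Lp.coeFn_zero ℝ ⊤ μ, h] with ω hinf hzero hω
  rw [hinf, Pi.inf_apply, hzero]
  exact hω

variable [IsFiniteMeasure μ]

variable (μ A) in
def acceptableLossSets : Set (Set Ω) :=
  {S | ∃ hS : MeasurableSet S, indicatorConstLp ⊤ hS (measure_ne_top μ S) (-1 : ℝ) ∈ A}

theorem mem_acceptableLossSets_of_ae_le (hsi : SurplusInvariant μ A) (hup : IsUpperSet A)
    (hcone : ∀ c : ℝ, 0 < c → ∀ X ∈ A, c • X ∈ A) {X : Lp ℝ ⊤ μ} (hX : X ∈ A) {ε : ℝ}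
    (hε : 0 < ε) {T : Set Ω} (hT : MeasurableSet T) (h : ∀ᵐ ω ∂μ, ω ∈ T → X ω ≤ -ε) :
    T ∈ acceptableLossSets μ A := by
  refine ⟨hT, hsi.mem_of_ae_min_le hup (hcone ε⁻¹ (inv_pos.2 hε) X hX) ?_⟩
  filter_upwards [Lp.coeFn_smul ε⁻¹ X, indicatorConstLp_coeFn (p := ⊤) (hs := hT)
    (hμs := measure_ne_top μ T) (c := (-1 : ℝ)), h] with ω hsmul hind hω
  rw [hsmul, hind, Pi.smul_apply, smul_eq_mul]
  by_cases hωT : ω ∈ T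
  · rw [Set.indicator_of_mem hωT]
    have : ε⁻¹ * X ω ≤ -1 := by
      rw [inv_mul_le_iff₀ hε]
      linarith [hω hωT]
    exact (min_le_left _ _).trans this
  · rw [Set.indicator_of_notMem hωT]
    exact min_le_right _ _

theorem empty_mem_acceptableLossSets (hsi : SurplusInvariant μ A) (hup : IsUpperSet A)
    (hcone : ∀ c : ℝ, 0 < c → ∀ X ∈ A, c • X ∈ A) (hA : A.Nonempty) :
    ∅ ∈ acceptableLossSets μ A :=
  mem_acceptableLossSets_of_ae_le hsi hup hcone hA.some_mem one_pos MeasurableSet.empty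
    (ae_of_all _ fun _ h => h.elim)

theorem union_mem_acceptableLossSets (hsi : SurplusInvariant μ A) (hup : IsUpperSet A)
    (hconv : Convex ℝ A) (hcone : ∀ c : ℝ, 0 < c → ∀ X ∈ A, c • X ∈ A) {S T : Set Ω}
    (hS : S ∈ acceptableLossSets μ A) (hT : T ∈ acceptableLossSets μ A) :
    S ∪ T ∈ acceptableLossSets μ A := by
  obtain ⟨hSm, hSA⟩ := hS
  obtain ⟨hTm, hTA⟩ := hT
  refine mem_acceptableLossSets_of_ae_le hsi hup hcone (hconv.add_mem_of_smul_mem hcone hSA hTA)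
    one_pos (hSm.union hTm) ?_
  filter_upwards [Lp.coeFn_add (indicatorConstLp ⊤ hSm (measure_ne_top μ S) (-1 : ℝ))
    (indicatorConstLp ⊤ hTm (measure_ne_top μ T) (-1 : ℝ)), indicatorConstLp_coeFn (p := ⊤)
    (hs := hSm) (hμs := measure_ne_top μ S) (c := (-1 : ℝ)), indicatorConstLp_coeFn (p := ⊤)
    (hs := hTm) (hμs := measure_ne_top μ T) (c := (-1 : ℝ))] with ω hadd hSω hTω hω
  rw [hadd, Pi.add_apply, hSω, hTω]
  rcases hω with hωS | hωT
  · by_cases hωT : ω ∈ T <;> simp [hωS, hωT]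
  · by_cases hωS : ω ∈ S <;> simp [hωS, hωT]

theorem iUnion_mem_acceptableLossSets_of_monotone
    (hclosed : @IsClosed _ (weakStarTopology μ) A) {U : ℕ → Set Ω} (hmono : Monotone U)
    (hU : ∀ n, U n ∈ acceptableLossSets μ A) : ⋃ n, U n ∈ acceptableLossSets μ A := by
  choose hUm hUA using hU
  refine ⟨MeasurableSet.iUnion hUm, @IsClosed.mem_of_tendsto _ (weakStarTopology μ) _ _ _ _
    atTop _ hclosed ?_ (Eventually.of_forall hUA)⟩
  refine tendsto_weakStarTopology_iff.2 fun Z => ?_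
  simp only [integral_indicatorConstLp_mul]
  exact (tendsto_setIntegral_of_monotone hUm hmono (L1.integrable_coeFn Z).integrableOn).const_mul _

theorem iUnion_mem_acceptableLossSets (hsi : SurplusInvariant μ A) (hup : IsUpperSet A)
    (hconv : Convex ℝ A) (hcone : ∀ c : ℝ, 0 < c → ∀ X ∈ A, c • X ∈ A)
    (hclosed : @IsClosed _ (weakStarTopology μ) A) {S : ℕ → Set Ω}
    (hS : ∀ n, S n ∈ acceptableLossSets μ A) : ⋃ n, S n ∈ acceptableLossSets μ A := by
  have hacc : ∀ n, Set.accumulate S n ∈ acceptableLossSets μ A := by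
    intro n
    induction n with
    | zero => simpa using hS 0
    | succ n ih =>
      simpa using union_mem_acceptableLossSets hsi hup hconv hcone ih (hS (n + 1))
  simpa [Set.iUnion_accumulate] using
    iUnion_mem_acceptableLossSets_of_monotone hclosed Set.monotone_accumulate hacc

theorem measure_eq_zero_of_disjoint_of_forall_measure_le (hsi : SurplusInvariant μ A)
    (hup : IsUpperSet A) (hconv : Convex ℝ A) (hcone : ∀ c : ℝ, 0 < c → ∀ X ∈ A, c • X ∈ A)
    {S T : Set Ω} (hS : S ∈ acceptableLossSets μ A)
    (hmax : ∀ T ∈ acceptableLossSets μ A, μ T ≤ μ S) (hT : T ∈ acceptableLossSets μ A)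
    (hST : Disjoint S T) : μ T = 0 := by
  have hle := hmax _ (union_mem_acceptableLossSets hsi hup hconv hcone hS hT)
  rw [measure_union hST hT.1] at hle
  exact nonpos_iff_eq_zero.1
    (ENNReal.le_of_add_le_add_left (measure_ne_top μ S) (by rwa [add_zero]))

theorem ae_nonneg_on_compl_of_forall_measure_le (hsi : SurplusInvariant μ A)
    (hup : IsUpperSet A) (hconv : Convex ℝ A) (hcone : ∀ c : ℝ, 0 < c → ∀ X ∈ A, c • X ∈ A)
    {S : Set Ω} (hS : S ∈ acceptableLossSets μ A)
    (hmax : ∀ T ∈ acceptableLossSets μ A, μ T ≤ μ S) {X : Lp ℝ ⊤ μ} (hX : X ∈ A) :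
    ∀ᵐ ω ∂μ, ω ∈ Sᶜ → 0 ≤ X ω := by
  have hgt : ∀ n : ℕ, ∀ᵐ ω ∂μ, ω ∈ Sᶜ → -(1 / (n + 1) : ℝ) < X ω := by
    intro n
    set T := Sᶜ ∩ {ω | X ω ≤ -(1 / (n + 1) : ℝ)}
    have hTm : MeasurableSet T :=
      hS.1.compl.inter (measurableSet_le (Lp.stronglyMeasurable X).measurable measurable_const)
    have hT : T ∈ acceptableLossSets μ A :=
      mem_acceptableLossSets_of_ae_le hsi hup hcone hX (by positivity) hTm
        (ae_of_all _ fun _ hω => hω.2)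
    have hμT : μ T = 0 := measure_eq_zero_of_disjoint_of_forall_measure_le hsi hup hconv hcone
      hS hmax hT (disjoint_compl_right.mono_right Set.inter_subset_left)
    filter_upwards [measure_eq_zero_iff_ae_notMem.1 hμT] with ω hωT hωS
    exact lt_of_not_ge fun hle => hωT ⟨hωS, hle⟩
  filter_upwards [ae_all_iff.2 hgt] with ω hω hωS
  by_contra hneg
  obtain ⟨n, hn⟩ := exists_nat_one_div_lt (neg_pos.2 (not_le.1 hneg))
  linarith [hω n hωS]

theorem mem_of_ae_nonneg_on_compl (hsi : SurplusInvariant μ A) (hup : IsUpperSet A)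
    (hcone : ∀ c : ℝ, 0 < c → ∀ X ∈ A, c • X ∈ A) {S : Set Ω} (hS : S ∈ acceptableLossSets μ A)
    {X : Lp ℝ ⊤ μ} (hX : ∀ᵐ ω ∂μ, ω ∈ Sᶜ → 0 ≤ X ω) : X ∈ A := by
  obtain ⟨hSm, hSA⟩ := hS
  refine hsi.mem_of_ae_min_le hup (hcone (‖X‖ + 1) (by positivity) _ hSA) ?_
  filter_upwards [Lp.coeFn_smul (‖X‖ + 1) (indicatorConstLp ⊤ hSm (measure_ne_top μ S) (-1 : ℝ)),
    indicatorConstLp_coeFn (p := ⊤) (hs := hSm) (hμs := measure_ne_top μ S) (c := (-1 : ℝ)),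
    Lp.ae_norm_le_norm_top X, hX] with ω hsmul hind hnorm hω
  rw [hsmul, Pi.smul_apply, hind, smul_eq_mul]
  by_cases hωS : ω ∈ S
  · rw [Real.norm_eq_abs] at hnorm
    rw [Set.indicator_of_mem hωS]
    linarith [min_le_left ((‖X‖ + 1) * -1) 0, neg_abs_le (X ω)]
  · rw [Set.indicator_of_notMem hωS, mul_zero, min_self]
    exact hω hωS

end AcceptanceSet

theorem coherent_surplusInvariant_is_SPAN_general
    (μ : Measure Ω) [IsProbabilityMeasure μ]
    (A : Set (Lp ℝ ⊤ μ)) (hA : IsAcceptanceSet μ A)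
    (hconv : Convex ℝ A) (hcone : ∀ c : ℝ, 0 < c → ∀ X ∈ A, c • X ∈ A)
    (hsi : SurplusInvariant μ A)
    (hclosed : @IsClosed _ (weakStarTopology μ) A) :
    ∃ B : Set Ω, MeasurableSet B ∧
      A = {X : Lp ℝ ⊤ μ | ∀ᵐ ω ∂μ, ω ∈ B → 0 ≤ X ω} := by
  have hup : IsUpperSet A := fun X Y hXY hX => hA.2.2 X hX Y hXY
  obtain ⟨S, hS, hmax⟩ := exists_forall_measure_le_of_iUnion_mem μ
    ⟨∅, empty_mem_acceptableLossSets hsi hup hcone hA.1⟩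
    fun S hS => iUnion_mem_acceptableLossSets hsi hup hconv hcone hclosed hS
  exact ⟨Sᶜ, hS.1.compl, Set.Subset.antisymm
    (fun X hX => ae_nonneg_on_compl_of_forall_measure_le hsi hup hconv hcone hS hmax hX)
    (fun X hX => mem_of_ae_nonneg_on_compl hsi hup hcone hS hX)⟩

theorem coherent_surplusInvariant_is_SPAN
    (μ : Measure Ω) [IsProbabilityMeasure μ]
    [TopologicalSpace.SeparableSpace (Lp ℝ 1 μ)]
    (A : Set (Lp ℝ ⊤ μ)) (hA : IsAcceptanceSet μ A)
    (hconv : Convex ℝ A) (hcone : ∀ c : ℝ, 0 < c → ∀ X ∈ A, c • X ∈ A)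
    (hsi : SurplusInvariant μ A)
    (hclosed : @IsClosed _ (weakStarTopology μ) A) :
    ∃ B : Set Ω, MeasurableSet B ∧
      A = {X : Lp ℝ ⊤ μ | ∀ᵐ ω ∂μ, ω ∈ B → 0 ≤ X ω} :=
  coherent_surplusInvariant_is_SPAN_general μ A hA hconv hcone hsi hclosed
end

section
/- Let A ⊂ ℝ^N be a closed, convex, surplus-invariant acceptance set with v_j := inf_{x ∈ A} x_j finite for j = 1,…,K and v_j = -∞ for j = K+1,…,N (1 ≤ K ≤ N). Let w := (v₁,…,v_K,0,…,0). Then the closed conic hull of A − w equals ℝ^K₊ × ℝ^{N−K}. -/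
/-!
The closed cone generated by `A - w` lies in the orthant `{x | ∀ j < K, 0 ≤ x j}` because `w j`
is the infimum of the `j`-th coordinate on `A` for `j < K`. Conversely, if `p + t • d ∈ A - w`
for all `t > 0`, then `d = lim (p + t • d) / t` lies in the closed cone. Upward closedness gives
this for every unit vector `e i`; surplus invariance (`x ∈ A → x ⊓ 0 ∈ A`) and unboundedness of
the coordinate `j ≥ K` give it for `-e j`. These vectors generate the orthant as a convex cone.
-/

/-- An acceptance set in `ℝ^N` (componentwise order): nonempty, proper, upward closed. -/
def IsAcceptanceSetFin {N : ℕ} (A : Set (Fin N → ℝ)) : Prop :=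
  A.Nonempty ∧ A ≠ Set.univ ∧ ∀ x ∈ A, ∀ y : Fin N → ℝ, x ≤ y → y ∈ A

/-- Surplus invariance in `ℝ^N`: `x ∈ A` and `y⁻ = x⁻` (componentwise) imply `y ∈ A`. -/
def SurplusInvariantFin {N : ℕ} (A : Set (Fin N → ℝ)) : Prop :=
  ∀ x ∈ A, ∀ y : Fin N → ℝ, (fun i => max (-(y i)) 0) = (fun i => max (-(x i)) 0) → y ∈ A

/-- The conic hull of a set: the smallest convex cone (closed under addition is implied by
convexity plus positive scalar multiplication) containing it. -/
def coneHull {E : Type*} [AddCommMonoid E] [Module ℝ E] (S : Set E) : Set E :=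
  ⋂₀ {C : Set E | S ⊆ C ∧ Convex ℝ C ∧ ∀ c : ℝ, 0 < c → ∀ x ∈ C, c • x ∈ C}

open Filter Topology

theorem coneHull_eq_hull {E : Type*} [AddCommMonoid E] [Module ℝ E] (S : Set E) :
    coneHull S = ConvexCone.hull ℝ S := by
  refine subset_antisymm
    (Set.sInter_subset_of_mem ⟨ConvexCone.subset_hull, (ConvexCone.hull ℝ S).convex,
      fun c hc x hx => (ConvexCone.hull ℝ S).smul_mem hc hx⟩) ?_
  let C : ConvexCone ℝ E :=
    { carrier := coneHull S
      smul_mem' := fun c hc x hx => Set.mem_sInter.2 fun D hD =>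
        hD.2.2 c hc x (Set.mem_sInter.1 hx D hD)
      add_mem' := fun x hx y hy => Set.mem_sInter.2 fun D hD => by
        -- `x + y = 2 • (x / 2 + y / 2)`
        have hmid := hD.2.1 (Set.mem_sInter.1 hx D hD) (Set.mem_sInter.1 hy D hD)
          (by norm_num : (0 : ℝ) ≤ 1 / 2) (by norm_num : (0 : ℝ) ≤ 1 / 2) (by norm_num)
        have := hD.2.2 2 two_pos _ hmid
        rwa [smul_add, smul_smul, smul_smul, show (2 : ℝ) * (1 / 2) = 1 by norm_num,
          one_smul, one_smul] at this }
  exact ConvexCone.hull_min (C := C) fun x hx => Set.mem_sInter.2 fun _ hD => hD.1 hx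

theorem ConvexCone.mem_closure_of_forall_add_smul_mem {E : Type*} [AddCommMonoid E]
    [Module ℝ E] [TopologicalSpace E] [ContinuousAdd E] [ContinuousSMul ℝ E]
    (C : ConvexCone ℝ E) {p d : E} (h : ∀ t : ℝ, 0 < t → p + t • d ∈ C) :
    d ∈ closure (C : Set E) := by
  have hlim : Tendsto (fun t : ℝ => t⁻¹ • p + d) atTop (𝓝 d) := by
    simpa using ((tendsto_inv_atTop_zero (𝕜 := ℝ)).smul_const p).add_const d
  refine mem_closure_of_tendsto hlim ?_
  filter_upwards [eventually_gt_atTop 0] with t ht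
  have := C.smul_mem (inv_pos.2 ht) (h t ht)
  rwa [smul_add, smul_smul, inv_mul_cancel₀ ht.ne', one_smul] at this

section Orthant

variable {ι : Type*}

def nonnegOnCone (p : ι → Prop) : PointedCone ℝ (ι → ℝ) where
  carrier := {x | ∀ i, p i → 0 ≤ x i}
  add_mem' hx hy i hi := add_nonneg (hx i hi) (hy i hi)
  zero_mem' _ _ := le_rfl
  smul_mem' c _ hx i hi := mul_nonneg c.2 (hx i hi)

theorem isClosed_nonnegOnCone (p : ι → Prop) : IsClosed (nonnegOnCone p : Set (ι → ℝ)) := by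
  simp only [nonnegOnCone, Submodule.coe_set_mk, AddSubmonoid.coe_set_mk,
    AddSubsemigroup.coe_set_mk, Set.ofPred_forall]
  exact isClosed_iInter fun i => isClosed_iInter fun _ =>
    isClosed_le continuous_const (continuous_apply i)

theorem nonnegOnCone_le [Fintype ι] [DecidableEq ι] (D : PointedCone ℝ (ι → ℝ)) (p : ι → Prop)
    (hpos : ∀ i, Pi.single i 1 ∈ D) (hneg : ∀ i, ¬ p i → -Pi.single i 1 ∈ D) :
    nonnegOnCone p ≤ D := by
  intro x hx
  rw [← Finset.univ_sum_single x]
  refine Submodule.sum_mem _ fun i _ => ?_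
  rw [show Pi.single i (x i) = x i • (Pi.single i 1 : ι → ℝ) by simp [← Pi.single_smul]]
  rcases le_or_gt 0 (x i) with hxi | hxi
  · exact D.smul_mem hxi (hpos i)
  · have hpi : ¬ p i := fun hpi => hxi.not_ge (hx i hpi)
    simpa using D.smul_mem (neg_nonneg.2 hxi.le) (hneg i hpi)

end Orthant

theorem IsUpperSet.add_smul_single_mem {ι : Type*} [DecidableEq ι] {A : Set (ι → ℝ)}
    (hA : IsUpperSet A) {a : ι → ℝ} (ha : a ∈ A) (i : ι) {t : ℝ} (ht : 0 ≤ t) :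
    a + t • Pi.single i 1 ∈ A :=
  hA (le_add_of_nonneg_right (smul_nonneg ht (Pi.single_nonneg.2 zero_le_one))) ha

section AcceptanceSet

variable {N : ℕ} {A : Set (Fin N → ℝ)}

theorem IsAcceptanceSetFin.isUpperSet (hA : IsAcceptanceSetFin A) : IsUpperSet A :=
  fun x y hxy hx => hA.2.2 x hx y hxy

theorem SurplusInvariantFin.inf_zero_mem (hsi : SurplusInvariantFin A) {x : Fin N → ℝ}
    (hx : x ∈ A) : x ⊓ 0 ∈ A :=
  hsi x hx _ <| funext fun i => by
    simp only [Pi.inf_apply, Pi.zero_apply, ← max_neg_neg, neg_zero, max_assoc, max_self]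

theorem SurplusInvariantFin.neg_smul_single_mem (hsi : SurplusInvariantFin A)
    (hA : IsUpperSet A) {j : Fin N} (hj : ¬ BddBelow ((fun x : Fin N → ℝ => x j) '' A))
    (t : ℝ) : -(t • Pi.single j 1) ∈ A := by
  obtain ⟨_, ⟨a, ha, rfl⟩, hat⟩ := not_bddBelow_iff.1 hj (-t)
  refine hA (fun i => ?_) (hsi.inf_zero_mem ha)
  rcases eq_or_ne i j with rfl | hij
  · exact (min_le_left _ _).trans (by simpa using hat.le)
  · simp [hij]

end AcceptanceSet

theorem closed_conic_hull_of_surplusInvariant_general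
    {N : ℕ} (K : ℕ)
    (A : Set (Fin N → ℝ)) (hA : IsAcceptanceSetFin A)
    (hsi : SurplusInvariantFin A)
    (hbdd : ∀ j : Fin N, (j : ℕ) < K → BddBelow ((fun x : Fin N → ℝ => x j) '' A))
    (hunb : ∀ j : Fin N, K ≤ (j : ℕ) → ¬ BddBelow ((fun x : Fin N → ℝ => x j) '' A))
    (w : Fin N → ℝ)
    (hw : ∀ j : Fin N, w j =
      if (j : ℕ) < K then sInf ((fun x : Fin N → ℝ => x j) '' A) else 0) :
    closure (coneHull ((fun x : Fin N → ℝ => x - w) '' A)) =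
      {x : Fin N → ℝ | ∀ j : Fin N, (j : ℕ) < K → 0 ≤ x j} := by
  set S := (fun x : Fin N → ℝ => x - w) '' A
  set P := nonnegOnCone fun j : Fin N => (j : ℕ) < K
  set C := (ConvexCone.hull ℝ S).closure
  rw [coneHull_eq_hull]
  have hSP : S ⊆ P := by
    rintro _ ⟨a, ha, rfl⟩ j hj
    have : w j ≤ a j := (hw j).trans (if_pos hj) ▸ csInf_le (hbdd j hj) ⟨a, ha, rfl⟩
    exact sub_nonneg.2 this
  have hCP : (C : Set (Fin N → ℝ)) ⊆ P :=
    closure_minimal (fun x hx => ConvexCone.hull_min (C := (P : ConvexCone ℝ _)) hSP hx)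
      (isClosed_nonnegOnCone _)
  have hmem {p d : Fin N → ℝ} (h : ∀ t : ℝ, 0 < t → p + t • d ∈ S) : d ∈ C :=
    (ConvexCone.hull ℝ S).mem_closure_of_forall_add_smul_mem
      fun t ht => ConvexCone.subset_hull (h t ht)
  obtain ⟨a, ha⟩ := hA.1
  have hC0 : C.Pointed := hmem (p := a - w) fun _ _ => ⟨a, ha, by simp⟩
  have hpos (i : Fin N) : Pi.single i 1 ∈ C := hmem (p := a - w) fun _ ht =>
    ⟨_, hA.isUpperSet.add_smul_single_mem ha i ht.le, add_sub_right_comm _ _ _⟩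
  have hneg (j : Fin N) (hj : ¬ (j : ℕ) < K) : -Pi.single j 1 ∈ C := hmem (p := -w) fun t _ =>
    ⟨_, hsi.neg_smul_single_mem hA.isUpperSet (hunb j (not_lt.1 hj)) t,
      by simp only [smul_neg, sub_eq_neg_add]⟩
  exact subset_antisymm hCP (nonnegOnCone_le (C.toPointedCone hC0) _ hpos hneg)

theorem closed_conic_hull_of_surplusInvariant
    {N : ℕ} (K : ℕ) (hK1 : 1 ≤ K) (hKN : K ≤ N)
    (A : Set (Fin N → ℝ)) (hA : IsAcceptanceSetFin A)
    (hconv : Convex ℝ A) (hcl : IsClosed A) (hsi : SurplusInvariantFin A)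
    (hbdd : ∀ j : Fin N, (j : ℕ) < K → BddBelow ((fun x : Fin N → ℝ => x j) '' A))
    (hunb : ∀ j : Fin N, K ≤ (j : ℕ) → ¬ BddBelow ((fun x : Fin N → ℝ => x j) '' A))
    (w : Fin N → ℝ)
    (hw : ∀ j : Fin N, w j =
      if (j : ℕ) < K then sInf ((fun x : Fin N → ℝ => x j) '' A) else 0) :
    closure (coneHull ((fun x : Fin N → ℝ => x - w) '' A)) =
      {x : Fin N → ℝ | ∀ j : Fin N, (j : ℕ) < K → 0 ≤ x j} :=
  closed_conic_hull_of_surplusInvariant_general K A hA hsi hbdd hunb w hw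
end

section
/- Let ρ: L^∞ → [0,∞) be a positive, surplus-invariant risk measure that is cash compatible, i.e., ρ(X + ρ(X)) = 0 for all X ∈ L^∞. Then ρ = ρ_A^∨ for some surplus-invariant acceptance set A ⊂ L^∞ (one may take A = {X : ρ(X) = 0}) if and only if ρ is cash subadditive, i.e., ρ(X + α) ≥ ρ(X) − α for all X ∈ L^∞ and α > 0. -/
open MeasureTheory

variable {Ω : Type*} [MeasurableSpace Ω]

/-- The cash-additive risk measure `ρ_A(X) = inf {m ∈ ℝ : X + m ∈ A}`. -/
noncomputable def rhoCash (μ : Measure Ω) [IsFiniteMeasure μ]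
    (A : Set (Lp ℝ ⊤ μ)) (X : Lp ℝ ⊤ μ) : ℝ :=
  sInf {m : ℝ | X + Lp.const ⊤ μ m ∈ A}

/-!
The representing acceptance set is the zero set `A = {ρ = 0}`; it inherits monotonicity and
surplus invariance from `ρ`. Writing `S = {m | ρ (X + m) = 0}`, cash compatibility gives
`ρ X ∈ S`, while cash subadditivity together with monotonicity give `ρ X ≤ max m 0` for every
`m ∈ S`; hence `ρ X` is the least element of `S` when it is positive, and `inf S ≤ 0` otherwise,
which is `ρ = ρ_A^∨`. Conversely `ρ_A` is cash additive wherever its defining set is nonempty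
and bounded below, and truncation at `0` turns this into cash subadditivity.
-/

section

variable {μ : Measure Ω}

theorem MeasureTheory.Lp.const_mono [IsFiniteMeasure μ] {m m' : ℝ} (h : m ≤ m') :
    Lp.const ⊤ μ m ≤ Lp.const ⊤ μ m' := by
  rw [← Lp.coeFn_le]
  filter_upwards [Lp.coeFn_const (μ := μ) (p := ⊤) m, Lp.coeFn_const (μ := μ) (p := ⊤) m']
    with ω h₁ h₂
  rw [h₁, h₂]
  exact h

def CashSubadditive [IsFiniteMeasure μ] (ρ : Lp ℝ ⊤ μ → ℝ) : Prop :=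
  ∀ (X : Lp ℝ ⊤ μ) (α : ℝ), 0 < α → ρ X - α ≤ ρ (X + Lp.const ⊤ μ α)

theorem rhoCash_add_const [IsFiniteMeasure μ] {A : Set (Lp ℝ ⊤ μ)} {X : Lp ℝ ⊤ μ} (α : ℝ)
    (hne : {m : ℝ | X + Lp.const ⊤ μ m ∈ A}.Nonempty)
    (hbdd : BddBelow {m : ℝ | X + Lp.const ⊤ μ m ∈ A}) :
    rhoCash μ A (X + Lp.const ⊤ μ α) = rhoCash μ A X - α := by
  have hshift : {m : ℝ | X + Lp.const ⊤ μ α + Lp.const ⊤ μ m ∈ A} =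
      OrderIso.addRight (-α) '' {m : ℝ | X + Lp.const ⊤ μ m ∈ A} := by
    ext m
    rw [OrderIso.image_eq_preimage_symm]
    simp [add_assoc, add_comm (Lp.const ⊤ μ α)]
  rw [rhoCash, hshift, ← OrderIso.map_csInf' _ hne hbdd]
  rfl

theorem cashSubadditive_max_rhoCash [IsFiniteMeasure μ] (A : Set (Lp ℝ ⊤ μ)) :
    CashSubadditive (fun X ↦ max (rhoCash μ A X) 0) := by
  intro X α hα
  dsimp only
  rcases le_or_gt (rhoCash μ A X) α with hle | hlt
  · linarith [le_max_right (rhoCash μ A (X + Lp.const ⊤ μ α)) 0, max_le hle hα.le]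
  -- a positive value of `ρ_A X` is not the junk value of `sInf`
  have hne : {m : ℝ | X + Lp.const ⊤ μ m ∈ A}.Nonempty := by
    by_contra h
    rw [Set.not_nonempty_iff_eq_empty] at h
    rw [rhoCash, h, Real.sInf_empty] at hlt
    linarith
  have hbdd : BddBelow {m : ℝ | X + Lp.const ⊤ μ m ∈ A} := by
    by_contra h
    rw [rhoCash, Real.sInf_of_not_bddBelow h] at hlt
    linarith
  rw [rhoCash_add_const α hne hbdd, max_eq_left (by linarith), max_eq_left (by linarith)]

theorem isAcceptanceSet_zero_set [IsFiniteMeasure μ] {ρ : Lp ℝ ⊤ μ → ℝ} (hmono : Antitone ρ)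
    (hpos : ∀ X, 0 ≤ ρ X) (hne : {X : Lp ℝ ⊤ μ | ρ X = 0}.Nonempty)
    (hproper : {X : Lp ℝ ⊤ μ | ρ X = 0} ≠ Set.univ) :
    IsAcceptanceSet μ {X : Lp ℝ ⊤ μ | ρ X = 0} :=
  ⟨hne, hproper, fun _ hX Y hXY ↦ le_antisymm (hX ▸ hmono hXY) (hpos Y)⟩

theorem surplusInvariant_zero_set {ρ : Lp ℝ ⊤ μ → ℝ} (hsi : ∀ X : Lp ℝ ⊤ μ, ρ X = ρ (X ⊓ 0)) :
    SurplusInvariant μ {X : Lp ℝ ⊤ μ | ρ X = 0} := by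
  intro X hX Y hneg
  have hinf : Y ⊓ 0 = X ⊓ 0 := by
    simpa [neg_sup] using congrArg Neg.neg hneg
  show ρ Y = 0
  rw [hsi Y, hinf, ← hsi X]
  exact hX

theorem le_max_of_eq_zero_add_const [IsFiniteMeasure μ] {ρ : Lp ℝ ⊤ μ → ℝ} (hmono : Antitone ρ)
    (hcs : CashSubadditive ρ) {X : Lp ℝ ⊤ μ} {m : ℝ} (hm : ρ (X + Lp.const ⊤ μ m) = 0) :
    ρ X ≤ max m 0 := by
  rcases le_or_gt m 0 with hm₀ | hm₀
  · have hle : X + Lp.const ⊤ μ m ≤ X := by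
      simpa using add_le_add_right (Lp.const_mono (μ := μ) hm₀) X
    exact (hm ▸ hmono hle).trans (le_max_right m 0)
  · linarith [hcs X m hm₀, le_max_left m 0]

theorem max_sInf_eq_of_mem_of_le_max {S : Set ℝ} {a : ℝ} (ha : a ∈ S) (ha₀ : 0 ≤ a)
    (hle : ∀ m ∈ S, a ≤ max m 0) : max (sInf S) 0 = a := by
  rcases ha₀.eq_or_lt with rfl | hpos
  · refine max_eq_right ?_
    by_cases hbdd : BddBelow S
    · exact csInf_le hbdd ha
    · exact (Real.sInf_of_not_bddBelow hbdd).le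
  · have hleast : IsLeast S a := ⟨ha, fun m hm ↦ by
      have := hle m hm
      rcases le_total m 0 with h | h
      · rw [max_eq_right h] at this; linarith
      · rwa [max_eq_left h] at this⟩
    rw [hleast.csInf_eq, max_eq_left hpos.le]

theorem eq_max_rhoCash_zero_set [IsFiniteMeasure μ] {ρ : Lp ℝ ⊤ μ → ℝ} (hmono : Antitone ρ)
    (hpos : ∀ X, 0 ≤ ρ X) (hcc : ∀ X : Lp ℝ ⊤ μ, ρ (X + Lp.const ⊤ μ (ρ X)) = 0)
    (hcs : CashSubadditive ρ) (X : Lp ℝ ⊤ μ) :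
    ρ X = max (rhoCash μ {Y : Lp ℝ ⊤ μ | ρ Y = 0} X) 0 :=
  (max_sInf_eq_of_mem_of_le_max (S := {m | ρ (X + Lp.const ⊤ μ m) = 0}) (hcc X) (hpos X)
    fun _ hm ↦ le_max_of_eq_zero_add_const hmono hcs hm).symm

end

theorem cash_compatible_truncated_representation_iff_cash_subadditive_general
    (μ : Measure Ω) [IsProbabilityMeasure μ]
    (ρ : Lp ℝ ⊤ μ → ℝ)
    (hmono : ∀ X Y : Lp ℝ ⊤ μ, X ≤ Y → ρ Y ≤ ρ X)
    (hpos : ∀ X, 0 ≤ ρ X)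
    (hne : {X : Lp ℝ ⊤ μ | ρ X = 0}.Nonempty)
    (hproper : {X : Lp ℝ ⊤ μ | ρ X = 0} ≠ Set.univ)
    (hsi : ∀ X : Lp ℝ ⊤ μ, ρ X = ρ (X ⊓ 0))
    (hcc : ∀ X : Lp ℝ ⊤ μ, ρ (X + Lp.const ⊤ μ (ρ X)) = 0) :
    ((∃ A : Set (Lp ℝ ⊤ μ), IsAcceptanceSet μ A ∧ SurplusInvariant μ A ∧
        ∀ X, ρ X = max (rhoCash μ A X) 0) ↔
      (∀ (X : Lp ℝ ⊤ μ) (α : ℝ), 0 < α →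
        ρ X - α ≤ ρ (X + Lp.const ⊤ μ α))) ∧
    ((∀ (X : Lp ℝ ⊤ μ) (α : ℝ), 0 < α →
        ρ X - α ≤ ρ (X + Lp.const ⊤ μ α)) →
      ∀ X, ρ X = max (rhoCash μ {Y : Lp ℝ ⊤ μ | ρ Y = 0} X) 0) := by
  have hanti : Antitone ρ := fun X Y h ↦ hmono X Y h
  have hrep (hcs : CashSubadditive ρ) := eq_max_rhoCash_zero_set hanti hpos hcc hcs
  refine ⟨⟨?_, fun hcs ↦ ⟨_, isAcceptanceSet_zero_set hanti hpos hne hproper,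
    surplusInvariant_zero_set hsi, hrep hcs⟩⟩, hrep⟩
  rintro ⟨A, -, -, hρ⟩
  rw [funext hρ]
  exact cashSubadditive_max_rhoCash A

theorem cash_compatible_truncated_representation_iff_cash_subadditive
    (μ : Measure Ω) [IsProbabilityMeasure μ]
    (ρ : Lp ℝ ⊤ μ → ℝ)
    (hmono : ∀ X Y : Lp ℝ ⊤ μ, X ≤ Y → ρ Y ≤ ρ X)
    (hpos : ∀ X, 0 ≤ ρ X) (hnorm : ρ 0 = 0)
    (hne : {X : Lp ℝ ⊤ μ | ρ X = 0}.Nonempty)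
    (hproper : {X : Lp ℝ ⊤ μ | ρ X = 0} ≠ Set.univ)
    (hsi : ∀ X : Lp ℝ ⊤ μ, ρ X = ρ (X ⊓ 0))
    (hcc : ∀ X : Lp ℝ ⊤ μ, ρ (X + Lp.const ⊤ μ (ρ X)) = 0) :
    ((∃ A : Set (Lp ℝ ⊤ μ), IsAcceptanceSet μ A ∧ SurplusInvariant μ A ∧
        ∀ X, ρ X = max (rhoCash μ A X) 0) ↔
      (∀ (X : Lp ℝ ⊤ μ) (α : ℝ), 0 < α →
        ρ X - α ≤ ρ (X + Lp.const ⊤ μ α))) ∧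
    ((∀ (X : Lp ℝ ⊤ μ) (α : ℝ), 0 < α →
        ρ X - α ≤ ρ (X + Lp.const ⊤ μ α)) →
      ∀ X, ρ X = max (rhoCash μ {Y : Lp ℝ ⊤ μ | ρ Y = 0} X) 0) :=
  cash_compatible_truncated_representation_iff_cash_subadditive_general μ ρ hmono hpos hne hproper
    hsi hcc
end
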